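/- arXiv:1303.1026 — 9 statements merged into one kernel-verified Lean document; each statement's English description precedes it below -/
import Mathlib

section
/- Let n and q be integers with n ≥ 2 and q ≥ 2, and let F be an alphabet of size q. Then every non-overlapping code C ⊆ F^n satisfies (2n−1)·|C| < q^n; equivalently, C(n,q) < q^n/(2n−1). -/
/-- Two words `u` and `v` of length `n` over alphabet `F` are overlapping if some
non-empty proper prefix of one equals a non-empty proper suffix of the other. -/
def Overlapping {F : Type*} {n : ℕ} (u v : Fin n → F) : Prop :=
  ∃ m : ℕ, ∃ _h1 : 0 < m, ∃ h2 : m < n,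
    ((∀ i : ℕ, ∀ hi : i < m, u ⟨i, hi.trans h2⟩ = v ⟨n - m + i, by omega⟩) ∨
     (∀ i : ℕ, ∀ hi : i < m, v ⟨i, hi.trans h2⟩ = u ⟨n - m + i, by omega⟩))

/-- A code `C ⊆ F^n` is non-overlapping if every two (not necessarily distinct)
codewords are non-overlapping. -/
def NonOverlappingCode {F : Type*} {n : ℕ} (C : Set (Fin n → F)) : Prop :=
  ∀ u ∈ C, ∀ v ∈ C, ¬ Overlapping u v

/-- `maxNOCode n q` is `C(n,q)`, the maximum cardinality of a non-overlapping
`q`-ary code of length `n`. -/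
noncomputable def maxNOCode (n q : ℕ) : ℕ :=
  sSup {m | ∃ C : Set (Fin n → Fin q), NonOverlappingCode C ∧ C.ncard = m}
/-! A codeword placed at any of the `2n - 1` positions of a cyclic word of length `2n - 1`, with
the remaining `n - 1` letters chosen freely, gives `(2n - 1)|C|q^(n-1)` cyclic words. They are
pairwise distinct: two occurrences of codewords at distinct positions of a cyclic word of length
`2n - 1` are less than `n` apart in one of the two directions, so the codewords overlap. None of
them is constant, since a constant word overlaps itself. Hence `(2n - 1)|C|q^(n-1) < q^(2n-1)`. -/

lemma overlapping_const {F : Type*} {n : ℕ} (hn : 2 ≤ n) (a : F) :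
    Overlapping (fun _ : Fin n => a) (fun _ => a) :=
  ⟨1, one_pos, hn, Or.inl fun _ _ => rfl⟩

namespace CyclicWord

variable {F : Type*} {n N : ℕ}

/-- Cyclic words of length `N` are functions `ZMod N → F`. -/
def OccursAt (w : ZMod N → F) (c : Fin n → F) (s : ZMod N) : Prop :=
  ∀ i : Fin n, w (s + (i : ℕ)) = c i

lemma OccursAt.eq {w : ZMod N → F} {c c' : Fin n → F} {s : ZMod N}
    (hc : OccursAt w c s) (hc' : OccursAt w c' s) : c = c' :=
  funext fun i => (hc i).symm.trans (hc' i)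

lemma OccursAt.overlapping [NeZero N] {w : ZMod N → F} {c c' : Fin n → F} {s s' : ZMod N}
    (hc : OccursAt w c s) (hc' : OccursAt w c' s') (hpos : 0 < (s' - s).val)
    (hlt : (s' - s).val < n) : Overlapping c' c := by
  set d := (s' - s).val with hd
  refine ⟨n - d, by omega, by omega, Or.inl fun i hi => ?_⟩
  have hshift : s' + (i : ℕ) = s + ((d + i : ℕ) : ZMod N) := by
    rw [Nat.cast_add, hd, ZMod.natCast_zmod_val]; ring
  rw [← hc' ⟨i, _⟩, hshift, hc ⟨d + i, by omega⟩]
  congr 2; omega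

/-- The cyclic word that reads `c` and then `r`, starting at position `s`. -/
def place [NeZero N] (c : Fin n → F) (s : ZMod N) (r : Fin (N - n) → F) : ZMod N → F :=
  fun t => if h : (t - s).val < n then c ⟨_, h⟩ else
    r ⟨(t - s).val - n, by have := ZMod.val_lt (t - s); omega⟩

variable [NeZero N]

lemma place_occursAt (hn : n ≤ N) (c : Fin n → F) (s : ZMod N) (r : Fin (N - n) → F) :
    OccursAt (place c s r) c s := by
  intro i
  have hi : ((s + (i : ℕ)) - s).val = i := by
    rw [add_sub_cancel_left, ZMod.val_natCast, Nat.mod_eq_of_lt (by omega)]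
  simp only [place, hi, i.isLt, dif_pos]

lemma place_add_natCast_add (c : Fin n → F) (s : ZMod N) (r : Fin (N - n) → F)
    (j : Fin (N - n)) : place c s r (s + ((n + j : ℕ) : ZMod N)) = r j := by
  have hj : ((s + ((n + j : ℕ) : ZMod N)) - s).val = n + j := by
    rw [add_sub_cancel_left, ZMod.val_natCast, Nat.mod_eq_of_lt (by omega)]
  simp only [place, hj, dif_neg (Nat.not_lt.mpr (Nat.le_add_right n j)), Nat.add_sub_cancel_left]

end CyclicWord

namespace NonOverlappingCode

open CyclicWord

variable {F : Type*} {n N : ℕ} {C : Set (Fin n → F)}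

lemma not_occursAt_const (hC : NonOverlappingCode C) (hn : 2 ≤ n) {c : Fin n → F} (hc : c ∈ C)
    (a : F) (s : ZMod N) : ¬ OccursAt (fun _ => a) c s := by
  intro h
  obtain rfl : (fun _ => a) = c := funext h
  exact hC _ hc _ hc (overlapping_const hn a)

section

variable [NeZero N]

lemma eq_of_occursAt (hC : NonOverlappingCode C) (hN : N < 2 * n) {w : ZMod N → F}
    {c c' : Fin n → F} (hc : c ∈ C) (hc' : c' ∈ C) {s s' : ZMod N} (hcs : OccursAt w c s)
    (hcs' : OccursAt w c' s') : s = s' := by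
  by_contra hne
  have hsub : s' - s ≠ 0 := sub_ne_zero.mpr (Ne.symm hne)
  have hpos : 0 < (s' - s).val := ZMod.val_pos.mpr hsub
  have hpos' : 0 < (s - s').val := ZMod.val_pos.mpr (sub_ne_zero.mpr hne)
  have hsum : (s - s').val = N - (s' - s).val := by
    rw [← neg_sub, ZMod.neg_val, if_neg hsub]
  have hltN := ZMod.val_lt (s' - s)
  rcases lt_or_ge (s' - s).val n with hlt | hge
  · exact hC c' hc' c hc (hcs.overlapping hcs' hpos hlt)
  · exact hC c hc c' hc' (hcs'.overlapping hcs hpos' (by omega))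

lemma place_injective (hC : NonOverlappingCode C) (hnN : n ≤ N) (hN : N < 2 * n) :
    Function.Injective fun x : C × ZMod N × (Fin (N - n) → F) => place x.1.1 x.2.1 x.2.2 := by
  rintro ⟨⟨c, hc⟩, s, r⟩ ⟨⟨c', hc'⟩, s', r'⟩ h
  dsimp only at h
  have hcs := place_occursAt hnN c s r
  have hcs' := place_occursAt hnN c' s' r'
  rw [h] at hcs
  obtain rfl : s = s' := eq_of_occursAt hC hN hc hc' hcs hcs'
  obtain rfl : c = c' := hcs.eq hcs'
  obtain rfl : r = r' := funext fun j => by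
    rw [← place_add_natCast_add c s r j, h, place_add_natCast_add]
  rfl

theorem ncard_mul_lt [Fintype F] [Nonempty F] (hC : NonOverlappingCode C) (hn : 2 ≤ n)
    (hnN : n ≤ N) (hN : N < 2 * n) :
    C.ncard * N * Fintype.card F ^ (N - n) < Fintype.card F ^ N := by
  classical
  have hlt := Fintype.card_lt_of_injective_not_surjective _ (place_injective hC hnN hN)
    fun hsurj => by
      obtain ⟨⟨⟨c, hc⟩, s, r⟩, h⟩ := hsurj fun _ => Classical.arbitrary F
      have hcs := place_occursAt hnN c s r
      dsimp only at h
      rw [h] at hcs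
      exact not_occursAt_const hC hn hc _ s hcs
  simpa [Fintype.card_prod, ZMod.card, Set.ncard_eq_toFinset_card', mul_assoc] using hlt

end

theorem mul_ncard_lt [Fintype F] [Nonempty F] (hC : NonOverlappingCode C) (hn : 2 ≤ n) :
    (2 * n - 1) * C.ncard < Fintype.card F ^ n := by
  have : NeZero (2 * n - 1) := ⟨by omega⟩
  have h := hC.ncard_mul_lt hn (N := 2 * n - 1) (by omega) (by omega)
  have hpow : Fintype.card F ^ (2 * n - 1) = Fintype.card F ^ n * Fintype.card F ^ (n - 1) := by
    rw [← pow_add]; congr 1; omega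
  rw [show 2 * n - 1 - n = n - 1 by omega, hpow, mul_comm C.ncard] at h
  exact Nat.lt_of_mul_lt_mul_right h

end NonOverlappingCode

theorem mul_maxNOCode_lt {n q : ℕ} (hn : 2 ≤ n) (hq : 0 < q) :
    (2 * n - 1) * maxNOCode n q < q ^ n := by
  have : Nonempty (Fin q) := ⟨⟨0, hq⟩⟩
  have hbound {m : ℕ} : m ∈ {m | ∃ C : Set (Fin n → Fin q), NonOverlappingCode C ∧ C.ncard = m} →
      (2 * n - 1) * m < q ^ n := by
    rintro ⟨C, hC, rfl⟩
    simpa using hC.mul_ncard_lt hn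
  refine hbound (Nat.sSup_mem ⟨0, ∅, fun _ h => h.elim, Set.ncard_empty _⟩ ⟨q ^ n, fun m hm => ?_⟩)
  exact (Nat.le_mul_of_pos_left m (by omega)).trans (hbound hm).le

/-- Theorem 1 of Blackburn, "Non-overlapping codes": if `n, q ≥ 2` and `F` has size `q`,
then any non-overlapping code `C ⊆ F^n` satisfies `(2n-1)|C| < q^n`; equivalently,
`C(n,q) < q^n/(2n-1)`. -/
theorem stmt0 {F : Type*} [Fintype F] {n q : ℕ} (hn : 2 ≤ n) (hq : 2 ≤ q)
    (hF : Fintype.card F = q) :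
    (∀ C : Set (Fin n → F), NonOverlappingCode C → (2 * n - 1) * C.ncard < q ^ n) ∧
    (maxNOCode n q : ℚ) < (q : ℚ) ^ n / (2 * (n : ℚ) - 1) := by
  have : Nonempty F := Fintype.card_pos_iff.mp (by omega)
  refine ⟨fun C hC => hF ▸ hC.mul_ncard_lt hn, ?_⟩
  have h : (((2 * n - 1) * maxNOCode n q : ℕ) : ℚ) < (q ^ n : ℕ) :=
    Nat.cast_lt.mpr (mul_maxNOCode_lt hn (by omega))
  have hn' : (2 : ℚ) ≤ n := by exact_mod_cast hn
  push_cast [Nat.cast_sub (by omega : 1 ≤ 2 * n)] at h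
  rw [lt_div_iff₀ (by linarith)]
  linarith
end

section
/- Let n ≥ 2 be an integer, let F be a finite alphabet, and let C ⊆ F^n be a non-overlapping code. For any word w ∈ F^{2n−1}, there is at most one index i ∈ {1, 2, …, 2n−1} such that the cyclic subword of w of length n starting at position i belongs to C. -/
/-- The cyclic subword of `w ∈ F^{2n-1}` of length `n` starting at position `i`
(0-indexed): the word `w_i w_{i+1} ⋯ w_{i+n-1}` with indices taken mod `2n-1`. -/
def cyclicSubword {F : Type*} {n : ℕ} (w : Fin (2 * n - 1) → F) (i : Fin (2 * n - 1)) :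
    Fin n → F :=
  fun j => w ⟨((i : ℕ) + (j : ℕ)) % (2 * n - 1), Nat.mod_lt _ i.pos⟩

/-
Two distinct positions of a cyclic word of length `2n - 1` are at cyclic distance at most
`n - 1` in one of the two directions. If the subword starting at `i` is followed, `d < n` steps
later, by the subword starting at `i + d`, the last `n - d` letters of the first one are the
first `n - d` letters of the second, so the two codewords overlap.
-/

lemma exists_shift_lt_of_ne {n i j : ℕ} (hi : i < 2 * n - 1) (hj : j < 2 * n - 1) (hij : i ≠ j) :
    ∃ d, 0 < d ∧ d < n ∧ ((i + d) % (2 * n - 1) = j ∨ (j + d) % (2 * n - 1) = i) := by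
  wlog hlt : i < j generalizing i j
  · obtain ⟨d, hd0, hdn, h | h⟩ := this hj hi hij.symm (by omega)
    · exact ⟨d, hd0, hdn, Or.inr h⟩
    · exact ⟨d, hd0, hdn, Or.inl h⟩
  rcases lt_or_ge (j - i) n with hd | hd
  · refine ⟨j - i, by omega, hd, Or.inl ?_⟩
    rw [Nat.add_sub_cancel' hlt.le, Nat.mod_eq_of_lt hj]
  · refine ⟨2 * n - 1 + i - j, by omega, by omega, Or.inr ?_⟩
    rw [show j + (2 * n - 1 + i - j) = i + (2 * n - 1) by omega, Nat.add_mod_right,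
      Nat.mod_eq_of_lt hi]

lemma overlapping_cyclicSubword_of_shift {F : Type*} {n : ℕ} (w : Fin (2 * n - 1) → F)
    (i j : Fin (2 * n - 1)) {d : ℕ} (hd0 : 0 < d) (hdn : d < n)
    (hij : ((i : ℕ) + d) % (2 * n - 1) = j) :
    Overlapping (cyclicSubword w i) (cyclicSubword w j) := by
  refine ⟨n - d, by omega, by omega, Or.inr fun k hk => congrArg w (Fin.ext ?_)⟩
  change ((j : ℕ) + k) % (2 * n - 1) = ((i : ℕ) + (n - (n - d) + k)) % (2 * n - 1)
  rw [Nat.sub_sub_self hdn.le, ← hij, Nat.mod_add_mod, Nat.add_assoc]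

theorem stmt1_general {F : Type*} {n : ℕ} (C : Set (Fin n → F))
    (hC : NonOverlappingCode C) (w : Fin (2 * n - 1) → F) :
    ∀ i j : Fin (2 * n - 1), cyclicSubword w i ∈ C → cyclicSubword w j ∈ C → i = j := by
  intro i j hi hj
  by_contra hne
  obtain ⟨d, hd0, hdn, hij | hji⟩ := exists_shift_lt_of_ne i.isLt j.isLt (Fin.val_ne_of_ne hne)
  · exact hC _ hi _ hj (overlapping_cyclicSubword_of_shift w i j hd0 hdn hij)
  · exact hC _ hj _ hi (overlapping_cyclicSubword_of_shift w j i hd0 hdn hji)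

/-- If `C ⊆ F^n` is a non-overlapping code, then for any word `w ∈ F^{2n-1}` there is
at most one starting position whose length-`n` cyclic subword of `w` lies in `C`. -/
theorem stmt1 {F : Type*} {n : ℕ} (hn : 2 ≤ n) (C : Set (Fin n → F))
    (hC : NonOverlappingCode C) (w : Fin (2 * n - 1) → F) :
    ∀ i j : Fin (2 * n - 1), cyclicSubword w i ∈ C → cyclicSubword w j ∈ C → i = j :=
  stmt1_general C hC w
end

section
/- Let n ≥ 2 and q ≥ 2 be integers, let F = {0, 1, …, q−1}, and let k be an integer with 1 ≤ k ≤ n−1. Let C be the set of all words c ∈ F^n such that: c_i = 0 for 1 ≤ i ≤ k; c_{k+1} ≠ 0 and c_n ≠ 0; and the word c_{k+2} c_{k+3} ⋯ c_{n−1} does not contain k consecutive zeroes. Then C is a non-overlapping code. -/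
/-- The code of Construction 1 (Chee, Kiah, Purkayastha and Wang): all words
`c ∈ {0,…,q-1}^n` whose first `k` letters are `0`, whose `(k+1)`st and `n`th letters are
nonzero, and such that `c_{k+2} ⋯ c_{n-1}` contains no `k` consecutive zeroes. -/
def CheeCode (n q k : ℕ) : Set (Fin n → Fin q) :=
  {c | (∀ i : Fin n, (i : ℕ) < k → (c i : ℕ) = 0) ∧
       (∀ i : Fin n, (i : ℕ) = k → (c i : ℕ) ≠ 0) ∧
       (∀ i : Fin n, (i : ℕ) = n - 1 → (c i : ℕ) ≠ 0) ∧
       ¬ ∃ s : ℕ, k + 1 ≤ s ∧ s + k ≤ n - 1 ∧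
          ∀ j : Fin n, s ≤ (j : ℕ) → (j : ℕ) < s + k → (c j : ℕ) = 0}

section PrefixEqSuffix

variable {F : Type*} {n : ℕ}

def PrefixEqSuffix (u v : Fin n → F) (m : ℕ) (hm : m < n) : Prop :=
  ∀ i : ℕ, ∀ hi : i < m, u ⟨i, hi.trans hm⟩ = v ⟨n - m + i, by omega⟩

theorem PrefixEqSuffix.apply_of_le {u v : Fin n → F} {m : ℕ} {hm : m < n} (h : PrefixEqSuffix u v m hm)
    (j : Fin n) (hj : n - m ≤ j) : u ⟨j - (n - m), by omega⟩ = v j := by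
  rw [h _ (by omega)]
  congr 1
  ext
  simp only
  omega

end PrefixEqSuffix

namespace CheeCode

variable {n q k m : ℕ} {u v : Fin n → Fin q}

theorem eq_zero_of_prefixEqSuffix (hu : u ∈ CheeCode n q k) {hm : m < n}
    (h : PrefixEqSuffix u v m hm) (j : Fin n) (hj₁ : n - m ≤ j) (hj₂ : (j : ℕ) < n - m + k) :
    (v j : ℕ) = 0 := by
  rw [← h.apply_of_le j hj₁]
  exact hu.1 _ (by simp only; omega)

theorem not_prefixEqSuffix (hu : u ∈ CheeCode n q k) (hv : v ∈ CheeCode n q k)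
    (hm₀ : 0 < m) (hm : m < n) : ¬ PrefixEqSuffix u v m hm := by
  obtain ⟨-, hv_k, hv_last, hv_run⟩ := hv
  intro h
  have hzero := eq_zero_of_prefixEqSuffix hu h
  by_cases hmk : m ≤ k
  · exact hv_last ⟨n - 1, by omega⟩ rfl (hzero _ (by simp only; omega) (by simp only; omega))
  by_cases hnk : n - m ≤ k
  · exact hv_k ⟨k, by omega⟩ rfl (hzero _ hnk (by simp only; omega))
  · exact hv_run ⟨n - m, by omega, by omega, hzero⟩

end CheeCode

theorem stmt4_general {n q k : ℕ} :
    NonOverlappingCode (CheeCode n q k) := by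
  rintro u hu v hv ⟨m, hm₀, hm, h | h⟩
  · exact CheeCode.not_prefixEqSuffix hu hv hm₀ hm h
  · exact CheeCode.not_prefixEqSuffix hv hu hm₀ hm h

/-- Construction 1 (Chee, Kiah, Purkayastha and Wang) yields a non-overlapping code. -/
theorem stmt4 {n q k : ℕ} (hn : 2 ≤ n) (hq : 2 ≤ q) (hk1 : 1 ≤ k) (hk2 : k ≤ n - 1) :
    NonOverlappingCode (CheeCode n q k) :=
  stmt4_general
end

section
/- Let q ≥ 2 be an integer and let n, k be integers with k ≥ 1 and 2k ≤ n−2. Then C(n,q) ≥ (q−1)^2·(q^{n−k−2} − (n−2k−1)·q^{n−2k−2}), where the right-hand side is interpreted as an integer (possibly negative). -/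
open Finset

section Counting

variable {ι α : Type*} [Fintype ι] [DecidableEq ι] [Fintype α] [DecidableEq α]

theorem card_filter_forall_mem_eq_const (S : Finset ι) (a : α) :
    #{f : ι → α | ∀ i ∈ S, f i = a} = Fintype.card α ^ #Sᶜ := by
  have hpi : ({f : ι → α | ∀ i ∈ S, f i = a} : Finset _)
      = Fintype.piFinset fun i => if i ∈ S then {a} else univ := by
    ext f
    simp only [mem_filter, mem_univ, true_and, Fintype.mem_piFinset]
    refine forall_congr' fun i => ?_
    split_ifs <;> simp [*]
  rw [hpi, Fintype.card_piFinset]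
  simp [apply_ite card, prod_ite, filter_not, compl_eq_univ_sdiff]

end Counting

theorem Fin.card_filter_le_and_lt_add {L j k : ℕ} (h : j + k ≤ L) :
    #{i : Fin L | j ≤ i ∧ (i : ℕ) < j + k} = k := by
  have hmap : ({i : Fin L | j ≤ i ∧ (i : ℕ) < j + k} : Finset _).map Fin.valEmbedding
      = Ico j (j + k) := by
    ext x
    simp only [mem_map, mem_filter, mem_univ, true_and, Fin.valEmbedding_apply, mem_Ico]
    constructor
    · rintro ⟨i, hi, rfl⟩
      exact hi
    · intro hx
      exact ⟨⟨x, by omega⟩, hx, rfl⟩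
  rw [← card_map, hmap, Nat.card_Ico, Nat.add_sub_cancel_left]

section ZeroRuns

variable {α : Type*} [Zero α]

def NoZeroRun (k : ℕ) {L : ℕ} (f : Fin L → α) : Prop :=
  ∀ j : ℕ, j + k ≤ L → ∃ i : Fin L, j ≤ i ∧ (i : ℕ) < j + k ∧ f i ≠ 0

theorem pow_le_ncard_noZeroRun_add [Fintype α] {k L : ℕ} (hkL : k ≤ L) :
    Fintype.card α ^ L
      ≤ {f : Fin L → α | NoZeroRun k f}.ncard + (L - k + 1) * Fintype.card α ^ (L - k) := by
  classical
  have hbad :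
      #{f : Fin L → α | ¬NoZeroRun k f} ≤ (L - k + 1) * Fintype.card α ^ (L - k) := by
    have hcover : ({f : Fin L → α | ¬NoZeroRun k f} : Finset _)
        ⊆ (range (L - k + 1)).biUnion fun j =>
          {f | ∀ i ∈ ({i : Fin L | j ≤ i ∧ (i : ℕ) < j + k} : Finset _), f i = 0} := by
      intro f hf
      simp only [NoZeroRun, mem_filter, mem_univ, true_and, not_forall, not_exists, not_and,
        not_not] at hf
      obtain ⟨j, hj, hzero⟩ := hf
      simp only [mem_biUnion, mem_range, mem_filter, mem_univ, true_and]
      exact ⟨j, by omega, fun i hi => hzero i hi.1 hi.2⟩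
    calc _ ≤ _ := card_le_card hcover
      _ ≤ _ := card_biUnion_le
      _ = ∑ _j ∈ range (L - k + 1), Fintype.card α ^ (L - k) := by
        refine sum_congr rfl fun j hj => ?_
        -- the two filters differ only in their decidability instances
        convert card_filter_forall_mem_eq_const
          {i : Fin L | j ≤ i ∧ (i : ℕ) < j + k} (0 : α) using 3
        rw [card_compl, Fintype.card_fin, Fin.card_filter_le_and_lt_add (by simp at hj; omega)]
      _ = (L - k + 1) * Fintype.card α ^ (L - k) := by simp
  have hsplit := card_filter_add_card_filter_not (s := univ) (NoZeroRun (α := α) k (L := L))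
  rw [card_univ, Fintype.card_fun, Fintype.card_fin] at hsplit
  rw [Set.ncard_eq_toFinset_card', Set.toFinset_ofPred]
  omega

def blackburnCode (n k : ℕ) : Set (Fin n → α) :=
  {w | (∀ i : Fin n, (i : ℕ) < k → w i = 0) ∧
    (∀ i : Fin n, (i : ℕ) = k → w i ≠ 0) ∧
    (∀ i : Fin n, (i : ℕ) = n - 1 → w i ≠ 0) ∧
    ∀ j, k < j → j + k < n → ∃ i : Fin n, j ≤ i ∧ (i : ℕ) < j + k ∧ w i ≠ 0}

namespace blackburnCode

variable {n k : ℕ} {w u v : Fin n → α}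

theorem exists_ne_zero (hw : w ∈ blackburnCode n k) {j : ℕ} (hj : 1 ≤ j) (hjn : j < n) :
    ∃ i : Fin n, j ≤ i ∧ (i : ℕ) < j + k ∧ w i ≠ 0 := by
  obtain ⟨-, hk, hlast, hmid⟩ := hw
  by_cases hshort : n ≤ j + k
  · exact ⟨⟨n - 1, by omega⟩, Nat.le_sub_one_of_lt hjn, by simp only; omega, hlast _ rfl⟩
  by_cases hjk : j ≤ k
  · exact ⟨⟨k, by omega⟩, hjk, by simp only; omega, hk _ rfl⟩
  · exact hmid j (by omega) (by omega)

theorem not_prefix_eq_suffix (hu : u ∈ blackburnCode n k) (hv : v ∈ blackburnCode n k)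
    {m : ℕ} (hm : 0 < m) (hmn : m < n)
    (h : ∀ i : ℕ, ∀ hi : i < m, u ⟨i, hi.trans hmn⟩ = v ⟨n - m + i, by omega⟩) :
    False := by
  obtain ⟨i, hi, hik, hvi⟩ := exists_ne_zero hv (j := n - m) (by omega) (by omega)
  have hidx : (⟨n - m + (i - (n - m)), by omega⟩ : Fin n) = i :=
    Fin.ext (by simp only; omega)
  have hui := h (i - (n - m)) (by omega)
  rw [hidx, hu.1 _ (by simp only; omega)] at hui
  exact hvi hui.symm

theorem nonOverlapping : NonOverlappingCode (blackburnCode (α := α) n k) := by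
  rintro u hu v hv ⟨m, hm, hmn, h | h⟩
  · exact not_prefix_eq_suffix hu hv hm hmn h
  · exact not_prefix_eq_suffix hv hu hm hmn h

end blackburnCode

def blackburnWord (n k : ℕ) (a b : α) (x : Fin (n - k - 2) → α) (i : Fin n) : α :=
  if hlt : (i : ℕ) < k then 0
  else if hk : (i : ℕ) = k then a
  else if hlast : (i : ℕ) = n - 1 then b
  else x ⟨i - (k + 1), by omega⟩

section blackburnWord

variable {n k : ℕ} {a b : α} {x : Fin (n - k - 2) → α}

theorem blackburnWord_apply_of_lt {i : Fin n} (hi : (i : ℕ) < k) :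
    blackburnWord n k a b x i = 0 := by
  simp [blackburnWord, hi]

theorem blackburnWord_apply_k (hkn : k < n) : blackburnWord n k a b x ⟨k, hkn⟩ = a := by
  simp [blackburnWord]

theorem blackburnWord_apply_last (hkn : k + 1 < n) :
    blackburnWord n k a b x ⟨n - 1, by omega⟩ = b := by
  simp [blackburnWord, show ¬n - 1 < k by omega, show n - 1 ≠ k by omega]

theorem blackburnWord_apply_middle (i : Fin (n - k - 2)) :
    blackburnWord n k a b x ⟨i + (k + 1), by omega⟩ = x i := by
  simp [blackburnWord, show ¬(i : ℕ) + (k + 1) < k by omega,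
    show (i : ℕ) + (k + 1) ≠ k by omega, show (i : ℕ) + (k + 1) ≠ n - 1 by omega]

theorem blackburnWord_injective (hkn : k + 1 < n) :
    Function.Injective fun p : α × α × (Fin (n - k - 2) → α) =>
      blackburnWord n k p.1 p.2.1 p.2.2 := by
  rintro ⟨a, b, x⟩ ⟨a', b', x'⟩ h
  have ha := congrFun h ⟨k, by omega⟩
  have hb := congrFun h ⟨n - 1, by omega⟩
  simp only [blackburnWord_apply_k, blackburnWord_apply_last hkn] at ha hb
  have hx : x = x' := funext fun i => by
    simpa only [blackburnWord_apply_middle] using congrFun h ⟨i + (k + 1), by omega⟩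
  rw [ha, hb, hx]

theorem blackburnWord_mem (hkn : k + 1 < n) (ha : a ≠ 0) (hb : b ≠ 0) (hx : NoZeroRun k x) :
    blackburnWord n k a b x ∈ blackburnCode n k := by
  refine ⟨fun i => blackburnWord_apply_of_lt, fun i hi => ?_, fun i hi => ?_,
    fun j hj hjn => ?_⟩
  · rwa [show i = ⟨k, by omega⟩ from Fin.ext hi, blackburnWord_apply_k]
  · rwa [show i = ⟨n - 1, by omega⟩ from Fin.ext hi, blackburnWord_apply_last hkn]
  · obtain ⟨i, hji, hik, hxi⟩ := hx (j - (k + 1)) (by omega)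
    refine ⟨⟨i + (k + 1), by omega⟩, by simp only; omega, by simp only; omega, ?_⟩
    rwa [blackburnWord_apply_middle]

end blackburnWord

theorem ncard_noZeroRun_mul_le_ncard_blackburnCode [Finite α] {n k : ℕ} (hkn : k + 1 < n) :
    (Nat.card α - 1) ^ 2 * {x : Fin (n - k - 2) → α | NoZeroRun k x}.ncard
      ≤ (blackburnCode (α := α) n k).ncard := by
  have hne : ({0}ᶜ : Set α).ncard = Nat.card α - 1 := by
    rw [Set.ncard_compl, Set.ncard_singleton]
  calc _ = (({0}ᶜ : Set α) ×ˢ ({0}ᶜ : Set α) ×ˢ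
          {x : Fin (n - k - 2) → α | NoZeroRun k x}).ncard := by
        rw [Set.ncard_prod, Set.ncard_prod, hne, sq, mul_assoc]
    _ ≤ _ := by
      refine Set.ncard_le_ncard_of_injOn _ ?_ (blackburnWord_injective hkn).injOn
        (Set.toFinite _)
      rintro ⟨a, b, x⟩ ⟨ha, hb, hx⟩
      exact blackburnWord_mem hkn ha hb hx

end ZeroRuns

theorem ncard_le_maxNOCode {n q : ℕ} {C : Set (Fin n → Fin q)} (hC : NonOverlappingCode C) :
    C.ncard ≤ maxNOCode n q :=
  le_csSup ⟨Nat.card (Fin n → Fin q), fun _ ⟨C', _, hC'⟩ => hC' ▸ Set.ncard_le_card C'⟩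
    ⟨C, hC, rfl⟩

/-- Lower bound from the proof of Lemma 2 of Blackburn, "Non-overlapping codes":
for `q ≥ 2`, `k ≥ 1` and `2k ≤ n - 2`,
`C(n,q) ≥ (q-1)² (q^{n-k-2} - (n-2k-1) q^{n-2k-2})`. -/
theorem stmt5 {n q k : ℕ} (hq : 2 ≤ q) (hk : 1 ≤ k) (hkn : 2 * k ≤ n - 2) :
    ((q : ℤ) - 1) ^ 2 * ((q : ℤ) ^ (n - k - 2) - ((n : ℤ) - 2 * k - 1) * (q : ℤ) ^ (n - 2 * k - 2))
      ≤ (maxNOCode n q : ℤ) := by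
  have : NeZero q := ⟨by omega⟩
  have hcount := pow_le_ncard_noZeroRun_add (α := Fin q) (k := k) (L := n - k - 2) (by omega)
  have hcode := ncard_noZeroRun_mul_le_ncard_blackburnCode (α := Fin q) (n := n) (k := k)
    (by omega)
  have hmax := ncard_le_maxNOCode (blackburnCode.nonOverlapping (α := Fin q) (n := n) (k := k))
  rw [Fintype.card_fin] at hcount
  rw [Nat.card_eq_fintype_card, Fintype.card_fin] at hcode
  set N := {x : Fin (n - k - 2) → Fin q | NoZeroRun k x}.ncard
  have hN : (q : ℤ) ^ (n - k - 2) - ((n : ℤ) - 2 * k - 1) * (q : ℤ) ^ (n - 2 * k - 2)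
      ≤ N := by
    rw [show n - 2 * k - 2 = n - k - 2 - k by omega,
      show (n : ℤ) - 2 * k - 1 = ((n - k - 2 - k + 1 : ℕ) : ℤ) by omega]
    exact sub_le_iff_le_add.2 (by exact_mod_cast hcount)
  calc _ ≤ ((q : ℤ) - 1) ^ 2 * N := mul_le_mul_of_nonneg_left hN (sq_nonneg _)
    _ = ((q - 1) ^ 2 * N : ℕ) := by push_cast [Nat.cast_sub (by omega : 1 ≤ q)]; ring
    _ ≤ maxNOCode n q := by exact_mod_cast hcode.trans hmax
end

section
/- Let n ≥ 2 and q ≥ 2 be integers, and let k and ℓ be integers with 1 ≤ k ≤ n−1 and 1 ≤ ℓ ≤ q−1. Let F be an alphabet of size q partitioned as F = I ∪ J with |I| = ℓ and |J| = q−ℓ, and let S ⊆ I^k ⊆ F^k. Let C be the set of all words c ∈ F^n such that: c_1 c_2 ⋯ c_k ∈ S; c_{k+1} ∈ J and c_n ∈ J; and the word c_{k+2} c_{k+3} ⋯ c_{n−1} is S-free. Then C is a non-overlapping code. -/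
/-- A word `x ∈ F^r` is `S`-free (for `S ⊆ F^k`) if no length-`k` (contiguous)
subword of `x` lies in `S`. If `r < k` this holds vacuously. -/
def SFree {F : Type*} {k : ℕ} (S : Set (Fin k → F)) {r : ℕ} (x : Fin r → F) : Prop :=
  ∀ i : ℕ, ∀ _hik : i + k ≤ r,
    (fun j : Fin k => x ⟨i + (j : ℕ), by have := j.isLt; omega⟩) ∉ S

section
variable {F : Type*} {n k : ℕ} {I J : Set F} {S : Set (Fin k → F)}

theorem prefix_ne_suffix_of_mem_of_sFree (hdisj : Disjoint I J) (hS : ∀ s ∈ S, ∀ i, s i ∈ I)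
    {u v : Fin n → F} (hk : k < n) (hu : (fun i : Fin k => u ⟨i, by omega⟩) ∈ S)
    (hvk : v ⟨k, hk⟩ ∈ J) (hvlast : v ⟨n - 1, by omega⟩ ∈ J)
    (hvfree : SFree S (fun j : Fin (n - k - 2) => v ⟨k + 1 + j, by omega⟩))
    {m : ℕ} (hm0 : 0 < m) (hmn : m < n) :
    ¬ ∀ i : ℕ, ∀ hi : i < m, u ⟨i, hi.trans hmn⟩ = v ⟨n - m + i, by omega⟩ := by
  intro hov
  have hov_at : ∀ p q (hp : p < m) (hq : q < n), q = n - m + p → u ⟨p, hp.trans hmn⟩ = v ⟨q, hq⟩ :=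
    fun p q hp _ hpq => (hov p hp).trans (congrArg v (Fin.ext hpq.symm))
  have huI : ∀ p (hp : p < k), u ⟨p, hp.trans hk⟩ ∈ I := fun p hp => hS _ hu ⟨p, hp⟩
  rcases le_or_gt m k with hmk | hkm
  · refine hdisj.notMem_of_mem_left (huI (m - 1) (by omega)) ?_
    rwa [hov_at (m - 1) (n - 1) (by omega) (by omega) (by omega)]
  rcases le_or_gt (n - m) k with hnmk | hknm
  · refine hdisj.notMem_of_mem_left (huI (k - (n - m)) (by omega)) ?_
    rwa [hov_at (k - (n - m)) k (by omega) hk (by omega)]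
  refine hvfree (n - m - (k + 1)) (by omega) ?_
  convert hu using 1
  funext j
  exact (hov_at j (k + 1 + (n - m - (k + 1) + j)) (by omega) (by omega) (by omega)).symm

end

theorem stmt7 {F : Type*} {n k : ℕ} (hn : 2 ≤ n) (hk2 : k ≤ n - 1)
    (I J : Set F) (hdisj : Disjoint I J)
    (S : Set (Fin k → F)) (hS : ∀ s ∈ S, ∀ i, s i ∈ I) :
    NonOverlappingCode {c : Fin n → F |
      (fun i : Fin k => c ⟨(i : ℕ), by have := i.isLt; omega⟩) ∈ S ∧
      c ⟨k, by omega⟩ ∈ J ∧ c ⟨n - 1, by omega⟩ ∈ J ∧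
      SFree S (fun j : Fin (n - k - 2) => c ⟨k + 1 + (j : ℕ), by have := j.isLt; omega⟩)} := by
  rintro u ⟨hu, huk, hulast, hufree⟩ v ⟨hv, hvk, hvlast, hvfree⟩ ⟨m, hm0, hmn, huv | hvu⟩
  · exact prefix_ne_suffix_of_mem_of_sFree hdisj hS (by omega) hu hvk hvlast hvfree hm0 hmn huv
  · exact prefix_ne_suffix_of_mem_of_sFree hdisj hS (by omega) hv huk hulast hufree hm0 hmn hvu
end

section
/- Let q ≥ 2 be an integer. Then C(2,q) = ⌊q/2⌋·⌈q/2⌉; that is, a largest q-ary non-overlapping code of length 2 has exactly ⌊q/2⌋·⌈q/2⌉ codewords. -/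
/-!
A word of length two is a pair `(a, b)`, and two such words overlap exactly when the first letter
of one is the last letter of the other. Hence a code is non-overlapping iff its set `A` of first
letters and its set `B` of last letters are disjoint; it then lies in `A × B`, and `|A| + |B| ≤ q`
gives `|A| |B| ≤ ⌊q/2⌋ ⌈q/2⌉`. Conversely, for any set `S` of letters, the words in `S × Sᶜ` form
a non-overlapping code, of the extremal size when `|S| = ⌊q/2⌋`.
-/

open Set

theorem Nat.mul_le_div_two_mul_succ_div_two_of_add_le {a b q : ℕ} (h : a + b ≤ q) :
    a * b ≤ q / 2 * ((q + 1) / 2) := by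
  rcases Nat.even_or_odd' q with ⟨k, rfl | rfl⟩
  · rw [show 2 * k / 2 = k by omega, show (2 * k + 1) / 2 = k by omega]
    nlinarith [sq_nonneg ((a : ℤ) - b)]
  · rw [show (2 * k + 1) / 2 = k by omega, show (2 * k + 1 + 1) / 2 = k + 1 by omega]
    nlinarith [sq_nonneg ((a : ℤ) - b)]

section LengthTwo

variable {F : Type*}

theorem overlapping_iff_of_length_two {u v : Fin 2 → F} :
    Overlapping u v ↔ u 0 = v 1 ∨ v 0 = u 1 := by
  constructor
  · rintro ⟨m, hm₀, hm₂, h | h⟩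
    all_goals obtain rfl : m = 1 := by omega
    exacts [Or.inl (h 0 one_pos), Or.inr (h 0 one_pos)]
  · have only_zero : ∀ i < 1, i = 0 := fun i hi => by omega
    rintro (h | h)
    · exact ⟨1, one_pos, one_lt_two, Or.inl fun i hi => by obtain rfl := only_zero i hi; exact h⟩
    · exact ⟨1, one_pos, one_lt_two, Or.inr fun i hi => by obtain rfl := only_zero i hi; exact h⟩

theorem nonOverlappingCode_iff_disjoint {C : Set (Fin 2 → F)} :
    NonOverlappingCode C ↔ Disjoint ((· 0) '' C) ((· 1) '' C) := by
  constructor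
  · intro hC
    rw [disjoint_left]
    rintro _ ⟨u, hu, rfl⟩ ⟨v, hv, hvu⟩
    exact hC u hu v hv (overlapping_iff_of_length_two.2 (.inl hvu.symm))
  · rintro hC u hu v hv huv
    rcases overlapping_iff_of_length_two.1 huv with h | h
    exacts [disjoint_left.1 hC ⟨u, hu, rfl⟩ ⟨v, hv, h.symm⟩,
      disjoint_left.1 hC ⟨v, hv, rfl⟩ ⟨u, hu, h.symm⟩]

theorem nonOverlappingCode_preimage_prod_compl (S : Set F) :
    NonOverlappingCode (finTwoArrowEquiv F ⁻¹' S ×ˢ Sᶜ) := by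
  rw [nonOverlappingCode_iff_disjoint, disjoint_left]
  rintro _ ⟨u, ⟨hu₀ : u 0 ∈ S, -⟩, rfl⟩ ⟨v, ⟨-, hv₁ : v 1 ∉ S⟩, hvu : v 1 = u 0⟩
  exact hv₁ (hvu ▸ hu₀)

theorem ncard_preimage_finTwoArrowEquiv (s : Set (F × F)) :
    (finTwoArrowEquiv F ⁻¹' s).ncard = s.ncard :=
  ncard_preimage_of_injective_subset_range (Equiv.injective _)
    ((finTwoArrowEquiv F).range_eq_univ ▸ subset_univ s)

theorem ncard_le_of_nonOverlappingCode [Finite F] {C : Set (Fin 2 → F)}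
    (hC : NonOverlappingCode C) : C.ncard ≤ Nat.card F / 2 * ((Nat.card F + 1) / 2) := by
  have hcard : ((· 0) '' C).ncard + ((· 1) '' C).ncard ≤ Nat.card F := by
    rw [← ncard_union_eq (nonOverlappingCode_iff_disjoint.1 hC)]
    exact ncard_le_card _
  calc C.ncard ≤ (finTwoArrowEquiv F ⁻¹' ((· 0) '' C) ×ˢ ((· 1) '' C)).ncard :=
        ncard_le_ncard fun u hu => ⟨mem_image_of_mem _ hu, mem_image_of_mem _ hu⟩
    _ = ((· 0) '' C).ncard * ((· 1) '' C).ncard := by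
        rw [ncard_preimage_finTwoArrowEquiv, ncard_prod]
    _ ≤ _ := Nat.mul_le_div_two_mul_succ_div_two_of_add_le hcard

theorem exists_nonOverlappingCode_ncard_eq [Finite F] : ∃ C : Set (Fin 2 → F),
    NonOverlappingCode C ∧ C.ncard = Nat.card F / 2 * ((Nat.card F + 1) / 2) := by
  cases nonempty_fintype F
  obtain ⟨S, -, hS⟩ := Finset.exists_subset_card_eq (Nat.div_le_self (Fintype.card F) 2)
  have hSc : (↑S : Set F)ᶜ.ncard = (Nat.card F + 1) / 2 := by
    have := ncard_add_ncard_compl (S : Set F)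
    rw [ncard_coe_finset, hS] at this
    rw [Nat.card_eq_fintype_card] at this ⊢
    omega
  refine ⟨_, nonOverlappingCode_preimage_prod_compl S, ?_⟩
  rw [ncard_preimage_finTwoArrowEquiv, ncard_prod, hSc, ncard_coe_finset, hS,
    Nat.card_eq_fintype_card]

theorem isGreatest_ncard_nonOverlappingCode_of_length_two [Finite F] :
    IsGreatest {m | ∃ C : Set (Fin 2 → F), NonOverlappingCode C ∧ C.ncard = m}
      (Nat.card F / 2 * ((Nat.card F + 1) / 2)) :=
  ⟨exists_nonOverlappingCode_ncard_eq, fun _ ⟨_, hC, hm⟩ => hm ▸ ncard_le_of_nonOverlappingCode hC⟩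

end LengthTwo

theorem stmt12_general {q : ℕ} :
    maxNOCode 2 q = (q / 2) * ((q + 1) / 2) := by
  simpa [maxNOCode] using (isGreatest_ncard_nonOverlappingCode_of_length_two (F := Fin q)).csSup_eq

/-- Theorem 4 of Blackburn, "Non-overlapping codes": `C(2,q) = ⌊q/2⌋ ⋅ ⌈q/2⌉`. -/
theorem stmt12 {q : ℕ} (hq : 2 ≤ q) :
    maxNOCode 2 q = (q / 2) * ((q + 1) / 2) :=
  stmt12_general
end

section
/- The limit lim_{q→∞} C(2,q)/(q^2/2) exists and equals 1/2, where the limit is taken over integers q tending to infinity. -/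
/-! Two words of length 2 overlap exactly when the first letter of one is the last letter of
the other. So `C` is non-overlapping iff its set `A` of first letters is disjoint from its set
`B` of last letters; then `|C| ≤ |A| |B| ≤ ((|A| + |B|) / 2)² ≤ q² / 4`, and splitting the
alphabet into halves `A`, `B` gives the code `A × B` of size
`⌊q / 2⌋ ⌈q / 2⌉ ≥ (q² - 1) / 4`. -/

section LengthTwo

variable {α : Type*}

theorem overlapping_two_iff (u v : Fin 2 → α) : Overlapping u v ↔ u 0 = v 1 ∨ v 0 = u 1 := by
  constructor
  · rintro ⟨m, hm0, hm2, h | h⟩ <;> obtain rfl : m = 1 := by omega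
    · exact .inl (h 0 one_pos)
    · exact .inr (h 0 one_pos)
  · rintro (h | h) <;> refine ⟨1, one_pos, one_lt_two, ?_⟩
    · exact .inl fun i hi => by obtain rfl : i = 0 := (by omega); exact h
    · exact .inr fun i hi => by obtain rfl : i = 0 := (by omega); exact h

theorem nonOverlappingCode_two_iff {C : Set (Fin 2 → α)} :
    NonOverlappingCode C ↔ Disjoint ((· 0) '' C) ((· 1) '' C) := by
  simp only [NonOverlappingCode, overlapping_two_iff, Set.disjoint_left, Set.mem_image]
  grind

theorem ncard_preimage_finTwoArrowEquiv_prod (A B : Set α) :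
    (finTwoArrowEquiv α ⁻¹' A ×ˢ B).ncard = A.ncard * B.ncard := by
  rw [Set.ncard_preimage_of_injective_subset_range (finTwoArrowEquiv α).injective
    ((finTwoArrowEquiv α).range_eq_univ ▸ Set.subset_univ _), Set.ncard_prod]

theorem NonOverlappingCode.four_mul_ncard_le [Finite α] {C : Set (Fin 2 → α)}
    (hC : NonOverlappingCode C) : 4 * C.ncard ≤ Nat.card α ^ 2 := by
  set A := (· 0) '' C
  set B := (· 1) '' C
  have hCAB : C.ncard ≤ A.ncard * B.ncard := by
    rw [← ncard_preimage_finTwoArrowEquiv_prod]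
    exact Set.ncard_le_ncard fun u hu => ⟨⟨u, hu, rfl⟩, ⟨u, hu, rfl⟩⟩
  have hAB : A.ncard + B.ncard ≤ Nat.card α := by
    rw [← Set.ncard_union_eq (nonOverlappingCode_two_iff.mp hC)]
    exact Set.ncard_le_card _
  calc 4 * C.ncard ≤ 4 * A.ncard * B.ncard := by rw [mul_assoc]; omega
    _ ≤ (A.ncard + B.ncard) ^ 2 := four_mul_le_sq_add _ _
    _ ≤ Nat.card α ^ 2 := Nat.pow_le_pow_left hAB 2

theorem exists_nonOverlappingCode_two_ncard_eq [Finite α] {k : ℕ} (hk : k ≤ Nat.card α) :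
    ∃ C : Set (Fin 2 → α), NonOverlappingCode C ∧ C.ncard = k * (Nat.card α - k) := by
  obtain ⟨A, -, hA⟩ := Set.exists_subset_card_eq (s := (Set.univ : Set α)) (by simpa using hk)
  refine ⟨finTwoArrowEquiv α ⁻¹' A ×ˢ Aᶜ, nonOverlappingCode_two_iff.mpr ?_, ?_⟩
  · rw [Set.disjoint_left]
    rintro _ ⟨u, hu, rfl⟩ ⟨v, hv, hvu⟩
    exact hv.2 (by simpa [finTwoArrowEquiv, hvu] using hu.1)
  · rw [ncard_preimage_finTwoArrowEquiv_prod, Set.ncard_compl, hA]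

end LengthTwo

theorem bddAbove_ncard_nonOverlappingCode_two (q : ℕ) :
    BddAbove {m | ∃ C : Set (Fin 2 → Fin q), NonOverlappingCode C ∧ C.ncard = m} :=
  ⟨q ^ 2, by
    rintro _ ⟨C, hC, rfl⟩
    have := hC.four_mul_ncard_le
    rw [Nat.card_fin] at this
    omega⟩

theorem four_mul_maxNOCode_two_le (q : ℕ) : 4 * maxNOCode 2 q ≤ q ^ 2 := by
  have : maxNOCode 2 q ≤ q ^ 2 / 4 := csSup_le' fun _ ⟨C, hC, hm⟩ => by
    have := hC.four_mul_ncard_le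
    rw [Nat.card_fin] at this
    omega
  omega

theorem sq_le_four_mul_maxNOCode_two_add_one (q : ℕ) : q ^ 2 ≤ 4 * maxNOCode 2 q + 1 := by
  obtain ⟨C, hC, hcard⟩ := exists_nonOverlappingCode_two_ncard_eq (α := Fin q)
    (Nat.card_fin q ▸ Nat.div_le_self q 2)
  have : q / 2 * (q - q / 2) ≤ maxNOCode 2 q :=
    le_csSup (bddAbove_ncard_nonOverlappingCode_two q) ⟨C, hC, by simpa using hcard⟩
  obtain ⟨k, rfl | rfl⟩ := Nat.even_or_odd' q
  · rw [show 2 * k / 2 = k by omega, show 2 * k - k = k by omega] at this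
    nlinarith
  · rw [show (2 * k + 1) / 2 = k by omega, show 2 * k + 1 - k = k + 1 by omega] at this
    nlinarith

/-- Theorem 4 of Blackburn, "Non-overlapping codes": `lim_{q→∞} C(2,q)/(q²/2) = 1/2`. -/
theorem stmt13 :
    Filter.Tendsto (fun q : ℕ => (maxNOCode 2 q : ℝ) / ((q : ℝ) ^ 2 / 2))
      Filter.atTop (nhds (1 / 2)) := by
  have hlower : Filter.Tendsto (fun q : ℕ => 1 / 2 - (1 / 2) / (q : ℝ) ^ 2) Filter.atTop
      (nhds (1 / 2)) := by
    simpa using tendsto_const_nhds.sub (tendsto_const_div_pow (1 / 2) 2 two_ne_zero)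
  refine tendsto_of_tendsto_of_tendsto_of_le_of_le' hlower tendsto_const_nhds ?_ ?_ <;>
    filter_upwards [Filter.eventually_gt_atTop 0] with q hq
  · have : (q : ℝ) ^ 2 ≤ 4 * maxNOCode 2 q + 1 :=
      mod_cast sq_le_four_mul_maxNOCode_two_add_one q
    rw [le_div_iff₀ (by positivity)]
    field_simp
    linarith
  · have : 4 * (maxNOCode 2 q : ℝ) ≤ (q : ℝ) ^ 2 := mod_cast four_mul_maxNOCode_two_le q
    rw [div_le_iff₀ (by positivity)]
    linarith
end

section
/- Let q ≥ 2 be an integer and let F be an alphabet with |F| = q. Then every non-overlapping code C ⊆ F^3 satisfies |C| ≤ max_{i ∈ {1, 2, …, q−1}} i^2·(q−i). -/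
/-!
Let `A` and `B` be the sets of first and last letters of a non-overlapping code `C ⊆ F³`, and
`P`, `S` its sets of length-two prefixes and suffixes. Overlaps of length one and two force
`A ∩ B = ∅` and `P ∩ S = ∅`. Sort the codewords `x m y` by their middle letter `m`: if `m ∈ A`
the word is determined by `x ∈ A` and the suffix `(m, y) ∈ S ∩ (A × B)`; if `m ∈ B` by the
prefix `(x, m) ∈ P ∩ (A × B)` and `y ∈ B`; otherwise by `(x, m, y) ∈ A × (A ∪ B)ᶜ × B`. Since
`S ∩ (A × B)` and `P ∩ (A × B)` are disjoint, with `i = |A|`, `b = |B|`, `c = q - i - b` this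
gives `|C| ≤ max(i, b) · i b + c · i b ≤ j² (q - j)` for `j = max(i, b) + c`.
-/

open Finset

section

variable {F : Type*}

namespace NonOverlappingCode

variable {C : Set (Fin 3 → F)} {u v : Fin 3 → F}

lemma head_ne_last (hC : NonOverlappingCode C) (hu : u ∈ C) (hv : v ∈ C) : u 0 ≠ v 2 :=
  fun h => hC u hu v hv ⟨1, one_pos, by omega, Or.inl fun i hi => by
    obtain rfl : i = 0 := by omega
    exact h⟩

lemma prefix_ne_suffix (hC : NonOverlappingCode C) (hu : u ∈ C) (hv : v ∈ C) :
    (u 0, u 1) ≠ (v 1, v 2) := by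
  intro h
  simp only [Prod.mk.injEq] at h
  refine hC u hu v hv ⟨2, two_pos, by omega, Or.inl fun i hi => ?_⟩
  interval_cases i
  exacts [h.1, h.2]

end NonOverlappingCode

section Letters

variable [DecidableEq F] (C : Finset (Fin 3 → F))

def firstLetters : Finset F := C.image (· 0)

def lastLetters : Finset F := C.image (· 2)

def twoPrefixes : Finset (F × F) := C.image fun w => (w 0, w 1)

def twoSuffixes : Finset (F × F) := C.image fun w => (w 1, w 2)

lemma card_le_by_middle_letter [Fintype F] :
    #C ≤ #(firstLetters C) * #(twoSuffixes C ∩ firstLetters C ×ˢ lastLetters C)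
      + #(twoPrefixes C ∩ firstLetters C ×ˢ lastLetters C) * #(lastLetters C)
      + #(firstLetters C) * #(firstLetters C ∪ lastLetters C)ᶜ * #(lastLetters C) := by
  set A := firstLetters C
  set B := lastLetters C
  have hcover : C ⊆ ((A ×ˢ (twoSuffixes C ∩ A ×ˢ B)).image fun x => ![x.1, x.2.1, x.2.2])
      ∪ (((twoPrefixes C ∩ A ×ˢ B) ×ˢ B).image fun x => ![x.1.1, x.1.2, x.2])
      ∪ ((A ×ˢ (A ∪ B)ᶜ ×ˢ B).image fun x => ![x.1, x.2.1, x.2.2]) := by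
    intro w hw
    have hw_eq : ![w 0, w 1, w 2] = w := by ext i; fin_cases i <;> rfl
    have ha : w 0 ∈ A := mem_image_of_mem _ hw
    have hb : w 2 ∈ B := mem_image_of_mem _ hw
    have hS : (w 1, w 2) ∈ twoSuffixes C := mem_image_of_mem _ hw
    have hP : (w 0, w 1) ∈ twoPrefixes C := mem_image_of_mem _ hw
    simp only [mem_union, mem_image, mem_product, mem_inter, mem_compl, Prod.exists]
    by_cases hmA : w 1 ∈ A
    · exact .inl <| .inl ⟨w 0, w 1, w 2, ⟨ha, hS, hmA, hb⟩, hw_eq⟩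
    by_cases hmB : w 1 ∈ B
    · exact .inl <| .inr ⟨w 0, w 1, w 2, ⟨⟨hP, ha, hmB⟩, hb⟩, hw_eq⟩
    · exact .inr ⟨w 0, w 1, w 2, ⟨ha, by simp [hmA, hmB], hb⟩, hw_eq⟩
  refine (card_le_card hcover).trans <| (card_union_le _ _).trans <|
    add_le_add ((card_union_le _ _).trans <| add_le_add ?_ ?_) ?_ <;>
  exact card_image_le.trans (by simp only [card_product, mul_assoc, le_refl])

variable {C}

lemma disjoint_firstLetters_lastLetters (hC : NonOverlappingCode (C : Set (Fin 3 → F))) :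
    Disjoint (firstLetters C) (lastLetters C) := by
  simp only [disjoint_left, firstLetters, lastLetters, mem_image]
  rintro _ ⟨u, hu, rfl⟩ ⟨v, hv, h⟩
  exact hC.head_ne_last hu hv h.symm

lemma card_twoSuffixes_add_card_twoPrefixes_le
    (hC : NonOverlappingCode (C : Set (Fin 3 → F))) :
    #(twoSuffixes C ∩ firstLetters C ×ˢ lastLetters C)
      + #(twoPrefixes C ∩ firstLetters C ×ˢ lastLetters C)
      ≤ #(firstLetters C) * #(lastLetters C) := by
  have hPS : Disjoint (twoSuffixes C) (twoPrefixes C) := by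
    simp only [disjoint_left, twoSuffixes, twoPrefixes, mem_image]
    rintro _ ⟨v, hv, rfl⟩ ⟨u, hu, h⟩
    exact hC.prefix_ne_suffix hu hv h
  rw [← card_union_of_disjoint (hPS.mono inter_subset_left inter_subset_left), ← card_product]
  exact card_le_card (union_subset inter_subset_right inter_subset_right)

end Letters

lemma mul_add_mul_add_mul_le_sup {i b c s p : ℕ} (hi : 1 ≤ i) (hb : 1 ≤ b)
    (hsp : s + p ≤ i * b) :
    i * s + p * b + i * c * b ≤ (Icc 1 (i + b + c - 1)).sup fun j => j ^ 2 * (i + b + c - j) := by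
  have hmax : i * s + p * b + i * c * b ≤ (max i b + c) ^ 2 * min i b := by
    rcases le_total i b with h | h
    · rw [max_eq_right h, min_eq_left h]
      calc i * s + p * b + i * c * b ≤ b * (s + p) + i * c * b := by
            nlinarith [Nat.mul_le_mul_right s h]
        _ ≤ b * (i * b) + i * c * b := by gcongr
        _ ≤ (b + c) ^ 2 * i := by nlinarith [Nat.zero_le (i * c * (b + c))]
    · rw [max_eq_left h, min_eq_right h]
      calc i * s + p * b + i * c * b ≤ i * (s + p) + i * c * b := by
            nlinarith [Nat.mul_le_mul_right p h]
        _ ≤ i * (i * b) + i * c * b := by gcongr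
        _ ≤ (i + c) ^ 2 * b := by nlinarith [Nat.zero_le (b * c * (i + c))]
  have hj : max i b + c ∈ Icc 1 (i + b + c - 1) := by
    simp only [mem_Icc]
    omega
  have hq : i + b + c - (max i b + c) = min i b := by omega
  calc i * s + p * b + i * c * b ≤ (max i b + c) ^ 2 * min i b := hmax
    _ = (max i b + c) ^ 2 * (i + b + c - (max i b + c)) := by rw [hq]
    _ ≤ _ := le_sup (f := fun j => j ^ 2 * (i + b + c - j)) hj

theorem NonOverlappingCode.card_le_sup [Fintype F] [DecidableEq F] {C : Finset (Fin 3 → F)}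
    (hC : NonOverlappingCode (C : Set (Fin 3 → F))) :
    #C ≤ (Icc 1 (Fintype.card F - 1)).sup fun j => j ^ 2 * (Fintype.card F - j) := by
  rcases C.eq_empty_or_nonempty with rfl | hne
  · simp
  have hq : Fintype.card F = #(firstLetters C) + #(lastLetters C)
      + #(firstLetters C ∪ lastLetters C)ᶜ := by
    rw [← card_union_of_disjoint (disjoint_firstLetters_lastLetters hC), card_add_card_compl]
  rw [hq]
  exact (card_le_by_middle_letter C).trans <| mul_add_mul_add_mul_le_sup
    (hne.image _).card_pos (hne.image _).card_pos (card_twoSuffixes_add_card_twoPrefixes_le hC)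

end

theorem stmt14_general {F : Type*} [Fintype F] {q : ℕ} (hF : Fintype.card F = q)
    (C : Set (Fin 3 → F)) (hC : NonOverlappingCode C) :
    C.ncard ≤ (Finset.Icc 1 (q - 1)).sup (fun i => i ^ 2 * (q - i)) := by
  classical
  obtain ⟨C, rfl⟩ := C.toFinite.exists_finset_coe
  rw [Set.ncard_coe_finset, ← hF]
  exact hC.card_le_sup

/-- Upper-bound step in Theorem 5 of Blackburn, "Non-overlapping codes": any
non-overlapping code `C ⊆ F³` over an alphabet of size `q` satisfies
`|C| ≤ max_{1 ≤ i ≤ q-1} i²(q - i)`. -/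
theorem stmt14 {F : Type*} [Fintype F] {q : ℕ} (hq : 2 ≤ q) (hF : Fintype.card F = q)
    (C : Set (Fin 3 → F)) (hC : NonOverlappingCode C) :
    C.ncard ≤ (Finset.Icc 1 (q - 1)).sup (fun i => i ^ 2 * (q - i)) :=
  stmt14_general hF C hC
end

section
/- Let q ≥ 2 be an integer. Then max_{i ∈ {1, 2, …, q−1}} i^2·(q−i) = [2q/3]^2·(q − [2q/3]), where [x] denotes the nearest integer to the real number x. -/
/-!
Writing `f i = i² (q - i)`, the difference factors as
`f m - f i = (m - i) (q (m + i) - (m² + m i + i²))`, and when `3m` is within `1` of `2q` the second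
factor has the sign of `m - i` at every integer `i ≥ 0`. Since `round (2q/3)` is within `1/2` of
`2q/3`, it is such an `m`, so it maximises `f` over the integers `0 ≤ i ≤ q`.
-/

lemma abs_sub_mul_round_div_le (n : ℤ) {d : ℕ} (hd : 0 < d) :
    2 * |n - d * round ((n : ℚ) / d)| ≤ d := by
  have hd' : (0 : ℚ) < d := by exact_mod_cast hd
  have hcast : (n : ℚ) - d * round ((n : ℚ) / d)
      = d * ((n : ℚ) / d - round ((n : ℚ) / d)) := by
    field_simp
  qify
  rw [hcast, abs_mul, abs_of_pos hd']
  nlinarith [abs_sub_round ((n : ℚ) / d)]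

lemma sq_mul_sub_le_of_abs_two_mul_sub_three_mul_le_one {q m i : ℤ} (hi : 0 ≤ i) (hm : 0 ≤ m)
    (h : |2 * q - 3 * m| ≤ 1) : i ^ 2 * (q - i) ≤ m ^ 2 * (q - m) := by
  obtain ⟨h₁, h₂⟩ := abs_le.mp h
  have factor : m ^ 2 * (q - m) - i ^ 2 * (q - i)
      = (m - i) * (q * (m + i) - (m ^ 2 + m * i + i ^ 2)) := by
    ring
  rw [← sub_nonneg, factor]
  rcases lt_trichotomy i m with hlt | rfl | hgt
  · refine mul_nonneg (by linarith) ?_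
    nlinarith [mul_nonneg (by linarith : 0 ≤ m - i - 1) (by linarith : 0 ≤ m + 2 * i)]
  · simp
  · refine mul_nonneg_of_nonpos_of_nonpos (by linarith) ?_
    nlinarith [mul_nonneg (by linarith : 0 ≤ i - m - 1) (by linarith : 0 ≤ 2 * i + m)]

lemma Finset.sup_sq_mul_tsub_eq {s : Finset ℕ} {q m : ℕ} (hm : m ∈ s) (hs : ∀ i ∈ s, i ≤ q)
    (h : |2 * (q : ℤ) - 3 * m| ≤ 1) : s.sup (fun i => i ^ 2 * (q - i)) = m ^ 2 * (q - m) := by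
  refine le_antisymm (Finset.sup_le fun i hi => ?_) (Finset.le_sup (f := fun i => i ^ 2 * (q - i)) hm)
  zify [hs i hi, hs m hm]
  exact sq_mul_sub_le_of_abs_two_mul_sub_three_mul_le_one i.cast_nonneg m.cast_nonneg h

/-- Optimisation step in Theorem 5 of Blackburn, "Non-overlapping codes":
`max_{1 ≤ i ≤ q-1} i²(q - i) = [2q/3]² (q - [2q/3])`, where `[x]` is the nearest
integer to `x`. -/
theorem stmt15 {q : ℕ} (hq : 2 ≤ q) :
    (((Finset.Icc 1 (q - 1)).sup (fun i => i ^ 2 * (q - i)) : ℕ) : ℤ)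
      = (round ((2 * (q : ℚ)) / 3)) ^ 2 * ((q : ℤ) - round ((2 * (q : ℚ)) / 3)) := by
  have habs : |2 * (q : ℤ) - 3 * round ((2 * (q : ℚ)) / 3)| ≤ 1 := by
    have := abs_sub_mul_round_div_le (2 * q) three_pos
    push_cast at this
    omega
  obtain ⟨h₁, h₂⟩ := abs_le.mp habs
  obtain ⟨m, hm⟩ := Int.eq_ofNat_of_zero_le (by linarith : 0 ≤ round ((2 * (q : ℚ)) / 3))
  rw [hm] at habs h₁ h₂ ⊢
  have hmem : m ∈ Finset.Icc 1 (q - 1) := Finset.mem_Icc.mpr ⟨by omega, by omega⟩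
  rw [Finset.sup_sq_mul_tsub_eq hmem (fun i hi => by grind) habs]
  push_cast [show m ≤ q by omega]
  ring
end
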